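/- The map δ⁵_{0,0} : 𝒲 → 𝓕_0 ⊗ 𝓕_0 defined by δ⁵(L_0) = v_0 ⊗ w_0, δ⁵(L_1) = 0, δ⁵(L_n) = -Σ_{i=1}^{n-1} v_i ⊗ w_{n-i} for n ≥ 2, and δ⁵(L_n) = Σ_{i=n}^{0} v_i ⊗ w_{n-i} for n ≤ -1, is a 1-cocycle of the Witt algebra with coefficients in 𝓕_0 ⊗ 𝓕_0. -/

import Mathlib

/-- The action of the Witt basis element `L m` on `𝓕_α ⊗ 𝓕_β`, realized on
`(ℤ × ℤ) →₀ ℂ` with basis `v_i ⊗ w_j ↦ single (i, j) 1`: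
`L_m · (v_i ⊗ w_j) = -(i + αm) v_{m+i} ⊗ w_j - (j + βm) v_i ⊗ w_{m+j}`. -/
noncomputable def tact (α β : ℂ) (m : ℤ) : ((ℤ × ℤ) →₀ ℂ) →ₗ[ℂ] ((ℤ × ℤ) →₀ ℂ) :=
  Finsupp.lsum ℂ fun p => LinearMap.toSpanSingleton ℂ ((ℤ × ℤ) →₀ ℂ)
    ((-((p.1 : ℂ) + α * m)) • Finsupp.single (m + p.1, p.2) (1 : ℂ)
      + (-((p.2 : ℂ) + β * m)) • Finsupp.single (p.1, m + p.2) (1 : ℂ))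

/-- A family `d n = d(L_n)` is a 1-cocycle of the Witt algebra with
coefficients in `𝓕_α ⊗ 𝓕_β`: `d([L_m, L_n]) = L_m · d(L_n) - L_n · d(L_m)`. -/
def IsCocycle (α β : ℂ) (d : ℤ → ((ℤ × ℤ) →₀ ℂ)) : Prop :=
  ∀ m n : ℤ, ((m - n : ℤ) : ℂ) • d (m + n) = tact α β m (d n) - tact α β n (d m)

/-- `d` is a 1-coboundary: `d(L_n) = L_n · u` for a fixed `u` in the module. -/
def IsCoboundary (α β : ℂ) (d : ℤ → ((ℤ × ℤ) →₀ ℂ)) : Prop :=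
  ∃ u : (ℤ × ℤ) →₀ ℂ, ∀ n : ℤ, d n = tact α β n u

/-- The map `δ⁵_{0,0} : 𝒲 → 𝓕_0 ⊗ 𝓕_0`. -/
noncomputable def d5 (n : ℤ) : (ℤ × ℤ) →₀ ℂ :=
  if n = 0 then Finsupp.single ((0 : ℤ), (0 : ℤ)) (1 : ℂ)
  else if n = 1 then 0
  else if 2 ≤ n then - ∑ i ∈ Finset.Icc (1 : ℤ) (n - 1), Finsupp.single (i, n - i) (1 : ℂ)
  else ∑ i ∈ Finset.Icc n (0 : ℤ), Finsupp.single (i, n - i) (1 : ℂ)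

/-!
Writing `χ` for the indicator of `{k ≤ 0}`, the four cases of `δ⁵` merge into the single formula
`δ⁵(L_n) = Σ_{i+j=n} (χ i + χ j - 1) v_i ⊗ w_j`. At a point `(i, j)` with `i + j = m + n`, the
cocycle identity then reduces to `x χ x - y χ y = x` for `x + y = 0` (that is,
`min x 0 - min (-x) 0 = x`), applied to the pairs `(i - m, j - n)` and `(i - n, j - m)`.
-/

lemma tact_apply (α β : ℂ) (m : ℤ) (f : (ℤ × ℤ) →₀ ℂ) (i j : ℤ) :
    tact α β m f (i, j) =
      -((i - m : ℂ) + α * m) * f (i - m, j) - ((j - m : ℂ) + β * m) * f (i, j - m) := by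
  induction f using Finsupp.induction_linear with
  | zero => simp
  | add f g hf hg => simp only [map_add, Finsupp.add_apply, hf, hg]; ring
  | single p c =>
    obtain ⟨k, l⟩ := p
    simp only [tact, Finsupp.lsum_single, LinearMap.toSpanSingleton_apply, Finsupp.smul_apply,
      Finsupp.add_apply, Finsupp.single_apply, Prod.mk.injEq, smul_eq_mul,
      show m + k = i ↔ k = i - m by omega, show m + l = j ↔ l = j - m by omega]
    split_ifs with h₁ h₂ h₂
    · obtain ⟨rfl, rfl⟩ := h₁
      obtain rfl : m = 0 := by omega
      push_cast
      ring
    · obtain ⟨rfl, rfl⟩ := h₁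
      push_cast
      ring
    · obtain ⟨rfl, rfl⟩ := h₂
      push_cast
      ring
    · ring

lemma sum_Icc_single_antidiagonal_apply (a b n i j : ℤ) :
    (∑ k ∈ Finset.Icc a b, Finsupp.single (k, n - k) (1 : ℂ)) (i, j) =
      if i + j = n ∧ a ≤ i ∧ i ≤ b then 1 else 0 := by
  simp only [Finsupp.finsetSum_apply, Finsupp.single_apply, Prod.mk.injEq, ite_and,
    Finset.sum_ite_eq', Finset.mem_Icc]
  split_ifs <;> first | rfl | omega

lemma d5_eq_sum_sub_sum (n : ℤ) :
    d5 n = ∑ k ∈ Finset.Icc n 0, Finsupp.single (k, n - k) (1 : ℂ)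
      - ∑ k ∈ Finset.Icc 1 (n - 1), Finsupp.single (k, n - k) 1 := by
  unfold d5
  split_ifs with h₀ h₁ h₂
  · subst h₀; simp
  · subst h₁; simp
  · rw [Finset.Icc_eq_empty_of_lt (show (0 : ℤ) < n by omega)]; simp
  · rw [Finset.Icc_eq_empty_of_lt (show n - 1 < 1 by omega)]; simp

lemma d5_apply (n i j : ℤ) :
    d5 n (i, j) = if i + j = n then
      (Set.Iic 0).indicator (1 : ℤ → ℂ) i + (Set.Iic 0).indicator 1 j - 1 else 0 := by
  simp only [d5_eq_sum_sub_sum, Finsupp.sub_apply, sum_Icc_single_antidiagonal_apply,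
    Set.indicator_apply, Set.mem_Iic, Pi.one_apply]
  split_ifs <;> first | (exfalso; omega) | norm_num

lemma mul_indicator_Iic_sub_of_add_eq_zero {R : Type*} [Ring R] {x y : ℤ} (h : x + y = 0) :
    (x : R) * (Set.Iic 0).indicator 1 x - y * (Set.Iic 0).indicator 1 y = x := by
  obtain rfl : y = -x := by omega
  rcases lt_trichotomy x 0 with hx | rfl | hx
  · simp [hx.le, show ¬ -x ≤ 0 by omega]
  · simp
  · simp [hx.not_ge, show -x ≤ 0 by omega]

/-- `δ⁵_{0,0}` is a 1-cocycle of the Witt algebra with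
coefficients in `𝓕_0 ⊗ 𝓕_0`. -/
theorem d5_isCocycle : IsCocycle 0 0 d5 := by
  intro m n
  ext ⟨i, j⟩
  simp only [Finsupp.smul_apply, Finsupp.sub_apply, tact_apply, d5_apply, smul_eq_mul,
    zero_mul, add_zero]
  by_cases h : i + j = m + n
  · rw [if_pos h, if_pos (by omega), if_pos (by omega), if_pos (by omega), if_pos (by omega)]
    have hmn := mul_indicator_Iic_sub_of_add_eq_zero (R := ℂ) (show i - m + (j - n) = 0 by omega)
    have hnm := mul_indicator_Iic_sub_of_add_eq_zero (R := ℂ) (show i - n + (j - m) = 0 by omega)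
    push_cast at hmn hnm ⊢
    linear_combination hmn - hnm
  · rw [if_neg h, if_neg (by omega), if_neg (by omega), if_neg (by omega), if_neg (by omega)]
    ring
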